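/- For distinct indices i ≠ j, even integers p ≥ 4 and positive even q, ∫_{S²} (x^i)^p (x^j)^q dμ = [(p−1)(p−3)⋯3 / ((q+1)(q+3)⋯(q+p−3))] · 4π / ((q+p−1)(q+p+1)). -/

import Mathlib

open MeasureTheory RealInnerProductSpace

noncomputable section

/-- Euclidean 3-space. -/
abbrev E3 := EuclideanSpace ℝ (Fin 3)

/-- The unit sphere `S²` in `ℝ³`. -/
abbrev S2 := Metric.sphere (0 : E3) 1

/-- The surface (area) measure on the unit sphere, normalized so that
the total area is `4π`. -/
abbrev sphereMeasure : Measure S2 := (volume : Measure E3).toSphere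

/-- The restriction of the `i`-th Cartesian coordinate function to the sphere. -/
def coordFn (i : Fin 3) (p : S2) : ℝ := (p : E3) i

/-- The `i`-th standard basis vector of `ℝ³`. -/
def e3 (i : Fin 3) : E3 := EuclideanSpace.single i (1 : ℝ)

open scoped Classical in
/-- The degree-zero homogeneous extension of a function on the unit sphere to `ℝ³`. -/
def homExt (A : S2 → ℝ) : E3 → ℝ := fun x =>
  if hx : ‖x‖⁻¹ • x ∈ S2 then A ⟨‖x‖⁻¹ • x, hx⟩ else 0

/-- The Euclidean Laplacian of a function on `ℝ³`. -/
def eLap (f : E3 → ℝ) (x : E3) : ℝ :=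
  ∑ i : Fin 3, iteratedFDeriv ℝ 2 f x ![e3 i, e3 i]

/-- The Laplace–Beltrami operator of the round metric on the unit sphere,
computed as the Euclidean Laplacian of the degree-zero homogeneous extension. -/
def sphereLap (A : S2 → ℝ) (p : S2) : ℝ := eLap (homExt A) (p : E3)

/-- The (round) gradient of a function on the unit sphere, viewed as a vector in `ℝ³`
tangent to the sphere: the Euclidean gradient of the degree-zero homogeneous extension. -/
def sphereGrad (A : S2 → ℝ) (p : S2) : E3 := gradient (homExt A) (p : E3)

/-!
Gaussian trick: integrate `(xⁱ)^p (xʲ)^q e^{-‖x‖²}` over `ℝ³` twice. By Fubini it is a product of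
one-dimensional Gaussian moments `∫ tⁿ e^{-t²} dt = Γ((n+1)/2)`; in polar coordinates it is the
sphere integral times `∫₀^∞ r^{p+q+2} e^{-r²} dr = Γ((p+q+3)/2)/2`. Hence the sphere integral is
`2 Γ((p+1)/2) Γ((q+1)/2) Γ(1/2) / Γ((p+q+3)/2)`, and `Γ(s+1) = s Γ(s)` turns this into the
product formula, raising `p` by two at a time starting from `p = 2`.
-/

open Real Set

theorem integral_Ioi_pow_mul_exp_neg_sq (n : ℕ) :
    ∫ r in Ioi (0 : ℝ), r ^ n * exp (-r ^ 2) = Gamma ((n + 1) / 2) / 2 := by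
  calc ∫ r in Ioi (0 : ℝ), r ^ n * exp (-r ^ 2)
      = ∫ r in Ioi (0 : ℝ), r ^ (n : ℝ) * exp (-r ^ (2 : ℝ)) := by
        simp only [rpow_natCast, rpow_two]
    _ = Gamma ((n + 1) / 2) / 2 := by
        rw [integral_rpow_mul_exp_neg_rpow two_pos (by linarith [n.cast_nonneg (α := ℝ)])]
        ring

theorem integral_pow_mul_exp_neg_sq {n : ℕ} (hn : Even n) :
    ∫ x : ℝ, x ^ n * exp (-x ^ 2) = Gamma ((n + 1) / 2) := by
  have h : (fun x : ℝ ↦ x ^ n * exp (-x ^ 2)) = fun x ↦ |x| ^ n * exp (-|x| ^ 2) := by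
    simp only [hn.pow_abs, sq_abs]
  rw [h, integral_comp_abs (f := fun x ↦ x ^ n * exp (-x ^ 2)), integral_Ioi_pow_mul_exp_neg_sq]
  ring

theorem EuclideanSpace.integral_prod_pow_mul_exp_neg_norm_sq {ι : Type*} [Fintype ι]
    (e : ι → ℕ) (he : ∀ k, Even (e k)) :
    ∫ x : EuclideanSpace ℝ ι, (∏ k, x k ^ e k) * exp (-‖x‖ ^ 2)
      = ∏ k, Gamma ((e k + 1) / 2) := by
  have hsplit : ∀ x : EuclideanSpace ℝ ι,
      (∏ k, x k ^ e k) * exp (-‖x‖ ^ 2) = ∏ k, (x k ^ e k * exp (-x k ^ 2)) := fun x ↦ by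
    rw [Finset.prod_mul_distrib, ← exp_sum, Finset.sum_neg_distrib, EuclideanSpace.norm_sq_eq]
    simp only [Real.norm_eq_abs, sq_abs]
  simp_rw [hsplit]
  rw [← (PiLp.volume_preserving_toLp ι).integral_comp
      (MeasurableEquiv.toLp 2 _).measurableEmbedding,
    integral_fintype_prod_volume_eq_prod (fun k t ↦ t ^ e k * exp (-t ^ 2))]
  exact Finset.prod_congr rfl fun k _ ↦ integral_pow_mul_exp_neg_sq (he k)

theorem MeasureTheory.Measure.integral_volumeIoiPow (n : ℕ) (f : ℝ → ℝ) :
    ∫ r, f r ∂(Measure.volumeIoiPow n) = ∫ r in Ioi (0 : ℝ), r ^ n * f r := by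
  simp only [Measure.volumeIoiPow, ENNReal.ofReal]
  rw [integral_withDensity_eq_integral_smul
      (measurable_subtype_coe.pow_const _).real_toNNReal,
    integral_subtype_comap measurableSet_Ioi fun r ↦ Real.toNNReal (r ^ n) • f r]
  refine setIntegral_congr_fun measurableSet_Ioi fun r hr ↦ ?_
  rw [NNReal.smul_def, Real.coe_toNNReal _ (pow_nonneg hr.out.le _), smul_eq_mul]

theorem MeasureTheory.Measure.integral_mul_exp_neg_norm_sq_of_homogeneous
    {E : Type*} [NormedAddCommGroup E] [NormedSpace ℝ E] [FiniteDimensional ℝ E]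
    [MeasurableSpace E] [BorelSpace E] [Nontrivial E] (μ : Measure E) [μ.IsAddHaarMeasure]
    {F : E → ℝ} {m : ℕ} (hF : ∀ r : ℝ, 0 < r → ∀ x, F (r • x) = r ^ m * F x) :
    ∫ x, F x * exp (-‖x‖ ^ 2) ∂μ
      = (∫ ω, F ω ∂μ.toSphere) * (Gamma ((m + Module.finrank ℝ E) / 2) / 2) := by
  have hdim : 0 < Module.finrank ℝ E := Module.finrank_pos
  calc ∫ x, F x * exp (-‖x‖ ^ 2) ∂μ
      = ∫ x : ({0}ᶜ : Set E), F x * exp (-‖(x : E)‖ ^ 2) ∂(μ.comap (↑)) := by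
        rw [integral_subtype_comap (measurableSet_singleton 0).compl
          (fun x ↦ F x * exp (-‖x‖ ^ 2)), restrict_compl_singleton]
    _ = ∫ y : Metric.sphere (0 : E) 1 × Ioi (0 : ℝ), F y.1 * ((y.2 : ℝ) ^ m * exp (-(y.2 : ℝ) ^ 2))
          ∂(μ.toSphere.prod (Measure.volumeIoiPow (Module.finrank ℝ E - 1))) := by
        rw [← μ.measurePreserving_homeomorphUnitSphereProd.integral_comp
          (Homeomorph.measurableEmbedding _)]
        refine integral_congr_ae (.of_forall fun x ↦ ?_)
        have hx : 0 < ‖(x : E)‖ := norm_pos_iff.2 x.2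
        simp only [homeomorphUnitSphereProd_apply_fst_coe, homeomorphUnitSphereProd_apply_snd_coe]
        rw [mul_left_comm, ← mul_assoc, ← hF _ hx, smul_inv_smul₀ hx.ne']
    _ = (∫ ω, F ω ∂μ.toSphere) * ∫ r in Ioi (0 : ℝ), r ^ (m + (Module.finrank ℝ E - 1))
          * exp (-r ^ 2) := by
        rw [integral_prod_mul (fun ω : Metric.sphere (0 : E) 1 ↦ F ω)
          (fun r : Ioi (0 : ℝ) ↦ (r : ℝ) ^ m * exp (-(r : ℝ) ^ 2)),
          Measure.integral_volumeIoiPow _ fun r ↦ r ^ m * exp (-r ^ 2)]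
        congr 1
        exact setIntegral_congr_fun measurableSet_Ioi fun r _ ↦ by ring
    _ = _ := by
        rw [integral_Ioi_pow_mul_exp_neg_sq, Nat.cast_add, Nat.cast_sub hdim, Nat.cast_one,
          add_assoc, sub_add_cancel]

theorem EuclideanSpace.integral_toSphere_prod_pow {ι : Type*} [Fintype ι] [Nonempty ι]
    (e : ι → ℕ) (he : ∀ k, Even (e k)) :
    ∫ ω, ∏ k, (ω : EuclideanSpace ℝ ι) k ^ e k ∂(volume : Measure (EuclideanSpace ℝ ι)).toSphere
      = 2 * (∏ k, Gamma ((e k + 1) / 2)) / Gamma (((∑ k, e k : ℕ) + Fintype.card ι) / 2) := by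
  have hpolar :=
    (volume : Measure (EuclideanSpace ℝ ι)).integral_mul_exp_neg_norm_sq_of_homogeneous
      (F := fun x ↦ ∏ k, x k ^ e k) (m := ∑ k, e k) fun r _ x ↦ by
      simp only [PiLp.smul_apply, smul_eq_mul, mul_pow, Finset.prod_mul_distrib,
        Finset.prod_pow_eq_pow_sum]
  rw [integral_prod_pow_mul_exp_neg_norm_sq e he, finrank_euclideanSpace] at hpolar
  have hΓ : Gamma (((∑ k, e k : ℕ) + Fintype.card ι) / 2) ≠ 0 :=
    (Gamma_pos_of_pos (by positivity)).ne'
  rw [hpolar]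
  field_simp

theorem Fin.exists_univ_eq_triple {i j : Fin 3} (hij : i ≠ j) :
    ∃ l, i ≠ l ∧ j ≠ l ∧ (Finset.univ : Finset (Fin 3)) = {i, j, l} := by
  revert i j; decide

-- `√π = Γ(1/2)` is the Gaussian moment of the third coordinate, which carries exponent `0`.
noncomputable def sphereMoment (p q : ℕ) : ℝ :=
  2 * Gamma ((p + 1) / 2) * Gamma ((q + 1) / 2) * √π / Gamma ((p + q + 3) / 2)

theorem integral_coordFn_pow_mul_pow {i j : Fin 3} (hij : i ≠ j) {p q : ℕ}
    (hp : Even p) (hq : Even q) :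
    ∫ z, coordFn i z ^ p * coordFn j z ^ q ∂sphereMeasure = sphereMoment p q := by
  obtain ⟨l, hil, hjl, huniv⟩ := Fin.exists_univ_eq_triple hij
  set e : Fin 3 → ℕ := Pi.single i p + Pi.single j q
  have he : ∀ k, Even (e k) := fun k ↦ by
    simp only [e, Pi.add_apply, Pi.single_apply]
    split_ifs <;> simp_all
  have hei : e i = p := by simp [e, hij.symm]
  have hej : e j = q := by simp [e, hij.symm]
  have hel : e l = 0 := by simp [e, hil.symm, hjl.symm]
  have hprod : ∀ f : Fin 3 → ℝ, ∏ k, f k = f i * f j * f l := fun f ↦ by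
    rw [huniv, Finset.prod_insert (by simp [hij, hil]), Finset.prod_pair hjl, mul_assoc]
  have hsum : ∑ k, e k = p + q := by
    rw [huniv, Finset.sum_insert (by simp [hij, hil]), Finset.sum_pair hjl, hei, hej, hel,
      add_zero]
  calc ∫ z, coordFn i z ^ p * coordFn j z ^ q ∂sphereMeasure
      = ∫ ω, ∏ k, (ω : E3) k ^ e k ∂sphereMeasure := by
        simp only [hprod, hei, hej, hel, pow_zero, mul_one, coordFn]
    _ = sphereMoment p q := by
        rw [EuclideanSpace.integral_toSphere_prod_pow e he, hprod, hsum, hei, hej, hel]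
        simp only [sphereMoment, Fintype.card_fin]
        push_cast
        rw [zero_add, Gamma_one_half_eq, ← mul_assoc, ← mul_assoc]

theorem sphereMoment_add_two (p q : ℕ) :
    sphereMoment (p + 2) q = (p + 1) / (p + q + 3) * sphereMoment p q := by
  have hp : ((p + 2 : ℕ) + 1 : ℝ) / 2 = (p + 1) / 2 + 1 := by push_cast; ring
  have hpq : ((p + 2 : ℕ) + q + 3 : ℝ) / 2 = (p + q + 3) / 2 + 1 := by push_cast; ring
  have hΓ : Gamma ((p + q + 3) / 2) ≠ 0 := (Gamma_pos_of_pos (by positivity)).ne'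
  rw [sphereMoment, sphereMoment, hp, hpq, Gamma_add_one (by positivity),
    Gamma_add_one (by positivity)]
  field_simp

theorem sphereMoment_two (q : ℕ) : sphereMoment 2 q = 4 * π / ((q + 1) * (q + 3)) := by
  have h3 : ((2 : ℕ) + 1 : ℝ) / 2 = 1 / 2 + 1 := by norm_num
  have hq : ((2 : ℕ) + q + 3 : ℝ) / 2 = (q + 1) / 2 + 1 + 1 := by push_cast; ring
  have hΓ : Gamma ((q + 1) / 2) ≠ 0 := (Gamma_pos_of_pos (by positivity)).ne'
  rw [sphereMoment, h3, hq, Gamma_add_one (by norm_num), Gamma_one_half_eq,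
    Gamma_add_one (by positivity), Gamma_add_one (by positivity)]
  field_simp
  rw [sq_sqrt pi_pos.le]
  ring

theorem sphereMoment_two_mul_add_two (m q : ℕ) :
    sphereMoment (2 * m + 2) q
      = (∏ k ∈ Finset.range m, (2 * m + 1 - 2 * k : ℝ))
          / (∏ k ∈ Finset.range m, (q + 1 + 2 * k : ℝ))
        * (4 * π / ((q + 2 * m + 1) * (q + 2 * m + 3))) := by
  induction m with
  | zero =>
    rw [sphereMoment_two]
    push_cast
    ring
  | succ m ih =>
    have hnum : ∏ k ∈ Finset.range (m + 1), (2 * ((m + 1 : ℕ) : ℝ) + 1 - 2 * k)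
        = (∏ k ∈ Finset.range m, (2 * m + 1 - 2 * k : ℝ)) * (2 * m + 3) := by
      rw [Finset.prod_range_succ']
      push_cast
      congr 1
      · exact Finset.prod_congr rfl fun k _ ↦ by ring
      · ring
    have hden : (q : ℝ) + 1 + 2 * m ≠ 0 := by positivity
    rw [hnum, Finset.prod_range_succ, show 2 * (m + 1) + 2 = 2 * m + 2 + 2 by ring,
      sphereMoment_add_two, ih]
    field_simp
    push_cast
    ring

theorem sphereMoment_eq_prod {p : ℕ} (hp : 2 ≤ p) (hep : Even p) (q : ℕ) :
    sphereMoment p q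
      = ((∏ k ∈ Finset.range ((p - 2) / 2), ((p : ℝ) - 1 - 2 * (k : ℝ)))
          / (∏ k ∈ Finset.range ((p - 2) / 2), ((q : ℝ) + 1 + 2 * (k : ℝ))))
        * (4 * Real.pi / (((q : ℝ) + p - 1) * ((q : ℝ) + p + 1))) := by
  obtain ⟨m, rfl⟩ : ∃ m, p = 2 * m + 2 := ⟨(p - 2) / 2, by obtain ⟨a, rfl⟩ := hep; omega⟩
  rw [show (2 * m + 2 - 2) / 2 = m by omega, sphereMoment_two_mul_add_two]
  have hfactor (k : ℝ) : 2 * (m : ℝ) + 2 - 1 - 2 * k = 2 * m + 1 - 2 * k := by ring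
  push_cast
  simp only [hfactor]
  ring

theorem sphere_integral_pow_pow_general (i j : Fin 3) (hij : i ≠ j) (p q : ℕ)
    (hp : 4 ≤ p) (hep : Even p) (heq : Even q) :
    ∫ z : S2, (coordFn i z) ^ p * (coordFn j z) ^ q ∂sphereMeasure
      = ((∏ k ∈ Finset.range ((p - 2) / 2), ((p : ℝ) - 1 - 2 * (k : ℝ)))
          / (∏ k ∈ Finset.range ((p - 2) / 2), ((q : ℝ) + 1 + 2 * (k : ℝ))))
        * (4 * Real.pi / (((q : ℝ) + p - 1) * ((q : ℝ) + p + 1))) := by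
  rw [integral_coordFn_pow_mul_pow hij hep heq, sphereMoment_eq_prod (by omega) hep]

/-- For `i ≠ j`, even `p ≥ 4` and positive even `q`,
`∫_{S²} (xⁱ)^p (xʲ)^q dμ = [(p-1)(p-3)⋯3 / ((q+1)(q+3)⋯(q+p-3))] · 4π/((q+p-1)(q+p+1))`. -/
theorem sphere_integral_pow_pow (i j : Fin 3) (hij : i ≠ j) (p q : ℕ)
    (hp : 4 ≤ p) (hep : Even p) (hq : 0 < q) (heq : Even q) :
    ∫ z : S2, (coordFn i z) ^ p * (coordFn j z) ^ q ∂sphereMeasure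
      = ((∏ k ∈ Finset.range ((p - 2) / 2), ((p : ℝ) - 1 - 2 * (k : ℝ)))
          / (∏ k ∈ Finset.range ((p - 2) / 2), ((q : ℝ) + 1 + 2 * (k : ℝ))))
        * (4 * Real.pi / (((q : ℝ) + p - 1) * ((q : ℝ) + p + 1))) :=
  sphere_integral_pow_pow_general i j hij p q hp hep heq
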